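/- For every real z, z + φ(z)/Φ(z) > 0, where φ and Φ are the standard normal pdf and CDF. -/

import Mathlib

/-!
Since `φ' = -u φ`, we have `∫_{-∞}^z (z - u) φ(u) du = z Φ(z) + φ(z)`, and the integrand is
positive on `(-∞, z)`. Hence `z Φ(z) + φ(z) > 0`; dividing by `Φ(z) > 0` gives the claim.
-/

open MeasureTheory

noncomputable def stdPdf (x : ℝ) : ℝ :=
  (Real.sqrt (2 * Real.pi))⁻¹ * Real.exp (-x ^ 2 / 2)

noncomputable def stdCdf (x : ℝ) : ℝ := ∫ u in Set.Iic x, stdPdf u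

open ProbabilityTheory Set Filter

lemma setIntegral_Iic_pos {f : ℝ → ℝ} {z : ℝ} (hf : IntegrableOn f (Iic z))
    (hpos : ∀ u < z, 0 < f u) : 0 < ∫ u in Iic z, f u := by
  rw [integral_Iic_eq_integral_Iio, setIntegral_pos_iff_support_of_nonneg_ae
    (ae_restrict_of_forall_mem measurableSet_Iio fun u hu => (hpos u hu).le)
    (hf.mono_set Iio_subset_Iic_self)]
  have hsupport : Function.support f ∩ Iio z = Iio z :=
    inter_eq_self_of_subset_right fun u hu => (hpos u hu).ne'
  simp [hsupport]

lemma stdPdf_eq_gaussianPDFReal : stdPdf = gaussianPDFReal 0 1 := by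
  ext x
  simp [stdPdf, gaussianPDFReal]

lemma stdPdf_pos (x : ℝ) : 0 < stdPdf x := by
  rw [stdPdf_eq_gaussianPDFReal]
  exact gaussianPDFReal_pos 0 1 x one_ne_zero

lemma integrable_stdPdf : Integrable stdPdf := by
  rw [stdPdf_eq_gaussianPDFReal]
  exact integrable_gaussianPDFReal 0 1

lemma integrable_neg_mul_stdPdf : Integrable fun u => -u * stdPdf u := by
  refine ((integrable_mul_exp_neg_mul_sq (b := 1 / 2) (by norm_num)).const_mul
    (-(Real.sqrt (2 * Real.pi))⁻¹)).congr (Eventually.of_forall fun u => ?_)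
  simp only [stdPdf]
  ring_nf

lemma hasDerivAt_stdPdf (x : ℝ) : HasDerivAt stdPdf (-x * stdPdf x) x := by
  have hexponent : HasDerivAt (fun x : ℝ => -x ^ 2 / 2) (-x) x :=
    ((hasDerivAt_pow 2 x).neg.div_const 2).congr_deriv (by ring)
  refine (hexponent.exp.const_mul (Real.sqrt (2 * Real.pi))⁻¹).congr_deriv ?_
  simp only [stdPdf]
  ring

lemma integral_Iic_neg_mul_stdPdf (z : ℝ) : ∫ u in Iic z, -u * stdPdf u = stdPdf z := by
  have hderiv : ∀ x ∈ Iic z, HasDerivAt stdPdf (-x * stdPdf x) x :=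
    fun x _ => hasDerivAt_stdPdf x
  rw [integral_Iic_of_hasDerivAt_of_tendsto' hderiv integrable_neg_mul_stdPdf.integrableOn
    (tendsto_zero_of_hasDerivAt_of_integrableOn_Iic hderiv
      integrable_neg_mul_stdPdf.integrableOn integrable_stdPdf.integrableOn), sub_zero]

lemma stdCdf_pos (z : ℝ) : 0 < stdCdf z :=
  setIntegral_Iic_pos integrable_stdPdf.integrableOn fun u _ => stdPdf_pos u

lemma integral_Iic_sub_mul_stdPdf (z : ℝ) :
    ∫ u in Iic z, (z - u) * stdPdf u = z * stdCdf z + stdPdf z := by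
  have hsplit : (fun u => (z - u) * stdPdf u) = fun u => z * stdPdf u + -u * stdPdf u := by
    ext u
    ring
  rw [hsplit, integral_add (integrable_stdPdf.const_mul z).integrableOn
    integrable_neg_mul_stdPdf.integrableOn, integral_const_mul, integral_Iic_neg_mul_stdPdf,
    stdCdf]

lemma mul_stdCdf_add_stdPdf_pos (z : ℝ) : 0 < z * stdCdf z + stdPdf z := by
  rw [← integral_Iic_sub_mul_stdPdf]
  refine setIntegral_Iic_pos ?_ fun u hu => mul_pos (sub_pos.mpr hu) (stdPdf_pos u)
  exact ((integrable_stdPdf.const_mul z).add integrable_neg_mul_stdPdf).integrableOn.congr_fun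
    (fun u _ => by simp only [Pi.add_apply]; ring) measurableSet_Iic

/-- For every real `z`, `z + φ(z)/Φ(z) > 0` (inverse Mills ratio bound). -/
theorem stmt4 (z : ℝ) : 0 < z + stdPdf z / stdCdf z := by
  have hcdf := stdCdf_pos z
  have hsum : z + stdPdf z / stdCdf z = (z * stdCdf z + stdPdf z) / stdCdf z := by
    field_simp
  rw [hsum]
  exact div_pos (mul_stdCdf_add_stdPdf_pos z) hcdf
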